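/- arXiv:2101.01695 — 16 statements merged into one kernel-verified Lean document; each statement's English description precedes it below -/
import Mathlib

section
/- Every irreducible submodule of a Noetherian module is primary. -/
open Pointwise


theorem irreducible_imp_primary_of_noetherian
    {R : Type*} [CommRing R] {M : Type*} [AddCommGroup M] [Module R M]
    [IsNoetherian R M] (N : Submodule R M) (hNe : N ≠ ⊤)
    (hN : ∀ K L : Submodule R M, N = K ⊓ L → N = K ∨ N = L) :
    ∀ (r : R) (x : M), r • x ∈ N → x ∉ N →
      ∃ n : ℕ, 1 ≤ n ∧ ∀ m : M, r ^ n • m ∈ N := by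
  intro r x hrx hx
  -- A n = {m | r^n • m ∈ N}
  set A : ℕ → Submodule R M := fun n => N.comap (r ^ n • (LinearMap.id : M →ₗ[R] M)) with hA
  have hAmem : ∀ n m, m ∈ A n ↔ r ^ n • m ∈ N := by
    intro n m
    simp [hA, Submodule.mem_comap]
  have hmono : Monotone A := by
    apply monotone_nat_of_le_succ
    intro n m hm
    rw [hAmem] at hm ⊢
    rw [pow_succ, mul_comm, mul_smul]
    exact N.smul_mem r hm
  obtain ⟨n₀, hn₀⟩ := monotone_stabilizes_iff_noetherian.mpr inferInstance ⟨A, hmono⟩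
  set n := n₀ + 1 with hn
  have hstab : A n = A (2 * n) := by
    have h1 := hn₀ n (by omega)
    have h2 := hn₀ (2 * n) (by omega)
    simp only [OrderHom.coe_mk] at h1 h2
    rw [← h1, ← h2]
  -- N = A n ⊓ (N ⊔ r^n • ⊤)
  have key : N = A n ⊓ (N ⊔ (r ^ n • ⊤ : Submodule R M)) := by
    apply le_antisymm
    · refine le_inf (fun m hm => ?_) le_sup_left
      rw [hAmem]
      exact N.smul_mem _ hm
    · intro m hm
      rw [Submodule.mem_inf] at hm
      obtain ⟨hm1, hm2⟩ := hm
      rw [hAmem] at hm1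
      obtain ⟨y, hy, z, hz, rfl⟩ := Submodule.mem_sup.mp hm2
      rw [← SetLike.mem_coe, Submodule.coe_pointwise_smul] at hz
      obtain ⟨w, -, rfl⟩ := Set.mem_smul_set.mp hz
      have hz2 : w ∈ A (2 * n) := by
        rw [hAmem, two_mul, pow_add, mul_smul]
        have : r ^ n • (y + r ^ n • w) - r ^ n • y = r ^ n • (r ^ n • w) := by
          rw [smul_add]; abel
        rw [← this]
        exact N.sub_mem hm1 (N.smul_mem _ hy)
      rw [← hstab, hAmem] at hz2
      exact N.add_mem hy hz2
  rcases hN _ _ key with h | h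
  · exfalso
    apply hx
    have hxA : x ∈ A n := by
      rw [hAmem, hn, pow_succ, mul_smul]
      exact N.smul_mem _ hrx
    rwa [h]
  · refine ⟨n, by omega, fun m => ?_⟩
    have : (r ^ n • ⊤ : Submodule R M) ≤ N := by
      have h2 : (r ^ n • ⊤ : Submodule R M) ≤ N ⊔ (r ^ n • ⊤ : Submodule R M) :=
        le_sup_right
      exact h2.trans h.ge
    exact this (Submodule.smul_mem_pointwise_smul m (r ^ n) ⊤ trivial)
end

section
/- If M is a multiplication R-module and N is a prime submodule of M, then N is strongly irreducible. -/
namespace Submodule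

variable {R M : Type*} [CommSemiring R] [AddCommMonoid M] [Module R M]

lemma colon_top_smul_top_le (N : Submodule R M) : N.colon ⊤ • (⊤ : Submodule R M) ≤ N :=
  smul_le.mpr fun _ hr m _ => mem_colon.mp hr m trivial

lemma le_of_colon_top_le {L N : Submodule R M} (hL : L = L.colon ⊤ • (⊤ : Submodule R M))
    (h : L.colon ⊤ ≤ N.colon ⊤) : L ≤ N :=
  calc L = L.colon ⊤ • (⊤ : Submodule R M) := hL
    _ ≤ N.colon ⊤ • (⊤ : Submodule R M) := smul_mono_left h
    _ ≤ N := N.colon_top_smul_top_le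

/-- A witness `k ∈ K \ N` is killed modulo `N` by every `r` with `r • M ⊆ L`, since `r • k ∈ K ⊓ L`;
primality of `N` then forces `r • M ⊆ N`. -/
lemma colon_top_le_of_inf_le {N K L : Submodule R M}
    (hprime : ∀ (r : R) (x : M), r • x ∈ N → x ∈ N ∨ r ∈ N.colon ⊤)
    (hKL : K ⊓ L ≤ N) (hK : ¬K ≤ N) : L.colon ⊤ ≤ N.colon ⊤ := by
  obtain ⟨k, hkK, hkN⟩ := SetLike.not_le_iff_exists.mp hK
  intro r hr
  have hrk : r • k ∈ K ⊓ L := ⟨K.smul_mem r hkK, mem_colon.mp hr k trivial⟩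
  exact (hprime r k (hKL hrk)).resolve_left hkN

end Submodule

theorem prime_submodule_strongly_irreducible_of_multiplication_general
    {R : Type*} [CommRing R] {M : Type*} [AddCommGroup M] [Module R M]
    (hM : ∀ K : Submodule R M, K = K.colon ⊤ • (⊤ : Submodule R M))
    (N : Submodule R M)
    (hprime : ∀ (r : R) (x : M), r • x ∈ N → x ∈ N ∨ r ∈ N.colon ⊤) :
    ∀ K L : Submodule R M, K ⊓ L ≤ N → K ≤ N ∨ L ≤ N := by
  intro K L hKL
  by_cases hK : K ≤ N
  · exact Or.inl hK
  · exact Or.inr <|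
      Submodule.le_of_colon_top_le (hM L) (Submodule.colon_top_le_of_inf_le hprime hKL hK)

theorem prime_submodule_strongly_irreducible_of_multiplication
    {R : Type*} [CommRing R] {M : Type*} [AddCommGroup M] [Module R M]
    (hM : ∀ K : Submodule R M, K = K.colon ⊤ • (⊤ : Submodule R M))
    (N : Submodule R M) (hNe : N ≠ ⊤)
    (hprime : ∀ (r : R) (x : M), r • x ∈ N → x ∈ N ∨ r ∈ N.colon ⊤) :
    ∀ K L : Submodule R M, K ⊓ L ≤ N → K ≤ N ∨ L ≤ N :=
  prime_submodule_strongly_irreducible_of_multiplication_general hM N hprime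
end

section
/- Let S be a multiplicatively closed subset of R, M an R-module, and N a submodule of M such that the localization S⁻¹N is a strongly irreducible submodule of S⁻¹M. Then the saturation S(N) = ⋃_{s∈S} (N :_M s) is a strongly irreducible submodule of M. -/
theorem saturation_strongly_irreducible
    {R : Type*} [CommRing R] {M : Type*} [AddCommGroup M] [Module R M]
    (S : Submonoid R) (N : Submodule R M)
    (hloc : ∀ K L : Submodule (Localization S) (LocalizedModule S M),
      K ⊓ L ≤ N.localized S → K ≤ N.localized S ∨ L ≤ N.localized S)
    (SN : Submodule R M)
    (hSN : ∀ x : M, x ∈ SN ↔ ∃ s ∈ S, s • x ∈ N) :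
    ∀ K L : Submodule R M, K ⊓ L ≤ SN → K ≤ SN ∨ L ≤ SN := by
  set f := LocalizedModule.mkLinearMap S M with hf
  have key : ∀ x : M, x ∈ SN ↔
      IsLocalizedModule.mk' f x (1 : S) ∈ N.localized S := by
    intro x
    rw [hSN]
    constructor
    · rintro ⟨s, hs, hsx⟩
      refine ⟨(⟨s, hs⟩ : S) • x, by simpa [Submonoid.smul_def] using hsx, ⟨s, hs⟩, ?_⟩
      rw [IsLocalizedModule.mk'_cancel, IsLocalizedModule.mk'_one]
    · rintro ⟨m, hm, s, hs⟩
      rw [IsLocalizedModule.mk'_eq_mk'_iff] at hs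
      obtain ⟨c, hc⟩ := hs
      refine ⟨(c : R) * (s : R), mul_mem c.2 s.2, ?_⟩
      have : ((c : R) * (s : R)) • x = c • s • x := by
        simp [Submonoid.smul_def, mul_smul]
      rw [this, hc]
      simpa [Submonoid.smul_def] using N.smul_mem (c : R) hm
  intro K L hKL
  have hsub : K.localized S ⊓ L.localized S ≤ N.localized S := by
    rintro z ⟨hzK, hzL⟩
    obtain ⟨k, hk, s, hks⟩ := hzK
    obtain ⟨l, hl, t, hlt⟩ := hzL
    have heq : IsLocalizedModule.mk' f k s = IsLocalizedModule.mk' f l t :=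
      hks.trans hlt.symm
    rw [IsLocalizedModule.mk'_eq_mk'_iff] at heq
    obtain ⟨c, hc⟩ := heq
    -- hc : c • s • l = c • t • k
    have hmK : c • t • k ∈ K := K.smul_mem _ (K.smul_mem _ hk)
    have hmL : c • t • k ∈ L := by
      rw [← hc]; exact L.smul_mem _ (L.smul_mem _ hl)
    have hmSN := hKL ⟨hmK, hmL⟩
    rw [hSN] at hmSN
    obtain ⟨v, hv, hvm⟩ := hmSN
    set d : S := ⟨v, hv⟩ * c * t with hd
    have hdk : d • k = v • (c • t • k) := by
      simp [hd, Submonoid.smul_def, mul_smul]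
    refine ⟨d • k, by rw [hdk]; exact hvm, d * s, ?_⟩
    rw [IsLocalizedModule.mk'_cancel_left, hks]
  rcases hloc _ _ hsub with h | h
  · left
    intro x hx
    exact (key x).2 (h ⟨x, hx, 1, by rw [IsLocalizedModule.mk'_one]⟩)
  · right
    intro x hx
    exact (key x).2 (h ⟨x, hx, 1, by rw [IsLocalizedModule.mk'_one]⟩)
end

section
/- Let N be a strongly irreducible primary submodule of an R-module M and let S be a multiplicatively closed subset of R with Rad(N :_R M) ∩ S = ∅. Then S⁻¹N is a strongly irreducible submodule of S⁻¹M. -/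
theorem localization_of_strongly_irreducible_primary
    {R : Type*} [CommRing R] {M : Type*} [AddCommGroup M] [Module R M]
    (S : Submonoid R) (N : Submodule R M) (hNe : N ≠ ⊤)
    (hprimary : ∀ (r : R) (x : M), r • x ∈ N → x ∉ N → r ∈ (N.colon ⊤).radical)
    (hSdisj : ∀ s ∈ S, s ∉ (N.colon ⊤).radical)
    (hsi : ∀ K L : Submodule R M, K ⊓ L ≤ N → K ≤ N ∨ L ≤ N) :
    ∀ K L : Submodule (Localization S) (LocalizedModule S M),
      K ⊓ L ≤ N.localized S → K ≤ N.localized S ∨ L ≤ N.localized S := by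
  intro K L hKL
  -- contractions
  set f := LocalizedModule.mkLinearMap S M
  set K₀ := (K.restrictScalars R).comap f with hK₀
  set L₀ := (L.restrictScalars R).comap f with hL₀
  -- every submodule of the localized module is contained in the localization of its contraction
  have key : ∀ (P : Submodule (Localization S) (LocalizedModule S M)),
      P ≤ ((P.restrictScalars R).comap f).localized S := by
    intro P z hz
    induction z using LocalizedModule.induction_on with
    | h m s =>
      have h1 : LocalizedModule.mk m 1 ∈ P := by
        have : (s : R) • LocalizedModule.mk m s = LocalizedModule.mk ((s : R) • m) s :=
          LocalizedModule.smul'_mk _ _ _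
        have h2 : (s : R) • LocalizedModule.mk m s ∈ P := P.smul_of_tower_mem _ hz
        rwa [this, ← Submonoid.smul_def, LocalizedModule.mk_cancel] at h2
      refine (Submodule.mem_localized' _ _ _ _ _).2 ⟨m, ?_, s, (IsLocalizedModule.mk_eq_mk' s m).symm⟩
      simpa [f] using h1
  -- contraction of the localization of N is N (uses primary & disjointness)
  have contr : ((N.localized S).restrictScalars R).comap f ≤ N := by
    intro m hm
    simp only [Submodule.mem_comap, Submodule.restrictScalars_mem] at hm
    obtain ⟨n, hn, s, hs⟩ := (Submodule.mem_localized' _ _ _ _ _).1 hm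
    rw [← IsLocalizedModule.mk_eq_mk'] at hs
    have : LocalizedModule.mk n s = LocalizedModule.mk m 1 := by
      simpa [f, LocalizedModule.mkLinearMap_apply] using hs
    obtain ⟨u, hu⟩ := LocalizedModule.mk_eq.1 this
    by_contra hmN
    have hmem : ((u : R) * (s : R)) • m ∈ N := by
      have : (u : R) • (1 : S) • n = ((u : R) * (s : R)) • m := by
        simpa [Submonoid.smul_def, mul_smul] using hu
      rw [← this]
      simpa using N.smul_mem (u : R) hn
    exact hSdisj _ (S.mul_mem u.2 s.2) (hprimary _ _ hmem hmN)
  -- localization is monotone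
  have mono : ∀ (A B : Submodule R M), A ≤ B → A.localized S ≤ B.localized S := by
    intro A B h z hz
    obtain ⟨m, hm, s, hs⟩ := (Submodule.mem_localized' _ _ _ _ _).1 hz
    exact (Submodule.mem_localized' _ _ _ _ _).2 ⟨m, h hm, s, hs⟩
  have h0 : K₀ ⊓ L₀ ≤ N := by
    intro m hm
    refine contr ?_
    simp only [Submodule.mem_inf, hK₀, hL₀, Submodule.mem_comap,
      Submodule.restrictScalars_mem] at hm ⊢
    exact hKL ⟨hm.1, hm.2⟩
  rcases hsi K₀ L₀ h0 with h | h
  · exact Or.inl (le_trans (key K) (mono _ _ h))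
  · exact Or.inr (le_trans (key L) (mono _ _ h))
end

section
/- Let p be a prime ideal of R and N a p-primary submodule of an R-module M such that the localization N_p is a strongly irreducible submodule of M_p. Then N is a strongly irreducible submodule of M. -/
theorem strongly_irreducible_of_localization_at_prime
    {R : Type*} [CommRing R] {M : Type*} [AddCommGroup M] [Module R M]
    (p : Ideal R) [p.IsPrime] (N : Submodule R M) (hNe : N ≠ ⊤)
    (hprimary : ∀ (r : R) (x : M), r • x ∈ N → x ∉ N → r ∈ p)
    (hrad : (N.colon ⊤).radical = p)
    (hloc : ∀ K L : Submodule (Localization p.primeCompl)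
        (LocalizedModule p.primeCompl M),
      K ⊓ L ≤ N.localized p.primeCompl →
        K ≤ N.localized p.primeCompl ∨ L ≤ N.localized p.primeCompl) :
    ∀ K L : Submodule R M, K ⊓ L ≤ N → K ≤ N ∨ L ≤ N := by
  intro K L hKL
  set f := LocalizedModule.mkLinearMap p.primeCompl M
  -- From S-submodule inclusion of localizations, deduce inclusion of submodules.
  have key : ∀ P : Submodule R M,
      P.localized p.primeCompl ≤ N.localized p.primeCompl → P ≤ N := by
    intro P hP x hx
    by_contra hxN
    have hmem : IsLocalizedModule.mk' f x (1 : p.primeCompl) ∈ N.localized p.primeCompl :=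
      hP ⟨x, hx, 1, rfl⟩
    obtain ⟨n, hn, s, hns⟩ := hmem
    rw [IsLocalizedModule.mk'_eq_mk'_iff] at hns
    obtain ⟨c, hc⟩ := hns
    simp only [one_smul] at hc
    have hsx : ((c : R) * (s : R)) • x ∈ N := by
      have h1 : ((c : R) * (s : R)) • x = (c : R) • n := by
        simpa [Submonoid.smul_def, smul_smul] using hc
      rw [h1]
      exact N.smul_mem _ hn
    have : (c : R) * (s : R) ∈ p := hprimary _ _ hsx hxN
    rcases (inferInstance : p.IsPrime).mem_or_mem this with h | h
    · exact c.2 h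
    · exact s.2 h
  -- show localizations intersect into N's localization
  have hinter : (K.localized p.primeCompl) ⊓ (L.localized p.primeCompl)
      ≤ N.localized p.primeCompl := by
    rintro x ⟨⟨k, hk, s, hks⟩, ⟨l, hl, t, hlt⟩⟩
    have heq : IsLocalizedModule.mk' f k s = IsLocalizedModule.mk' f l t := by
      rw [hks, hlt]
    rw [IsLocalizedModule.mk'_eq_mk'_iff] at heq
    obtain ⟨c, hc⟩ := heq
    -- hc : c • s • l = c • t • k
    have hmemN : ((c : R) * (t : R)) • k ∈ N := by
      apply hKL
      constructor
      · exact K.smul_mem _ hk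
      · have : ((c : R) * (t : R)) • k = ((c : R) * (s : R)) • l := by
          simpa [Submonoid.smul_def, smul_smul] using hc.symm
        rw [this]
        exact L.smul_mem _ hl
    refine ⟨((c : R) * (t : R)) • k, hmemN, c * t * s, ?_⟩
    rw [← hks]
    rw [IsLocalizedModule.mk'_eq_mk'_iff]
    exact ⟨1, by simp [Submonoid.smul_def, smul_smul, mul_comm, mul_left_comm]⟩
  rcases hloc _ _ hinter with h | h
  · exact Or.inl (key K h)
  · exact Or.inr (key L h)
end

section
/- Let T be a commutative ring that is a faithfully flat R-algebra, M an R-module, and N a submodule of M such that the image N ⊗_R T is a strongly irreducible submodule of M ⊗_R T. Then N is a strongly irreducible submodule of M. -/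
/-!
Flat base change of submodules commutes with intersections, since `p ⊓ q` is the image of the
pullback of `q` along `p ↪ M` and flat base change preserves kernels. Faithfully flat base change
also reflects inclusions (`Submodule.baseChange_le_iff`), so `K ⊓ L ≤ N` base changes to
`K_T ⊓ L_T ≤ N_T`, and the inclusion `K_T ≤ N_T` or `L_T ≤ N_T` given there descends.
-/

section

variable {R : Type*} [CommSemiring R] (A : Type*) [Semiring A] [Algebra R A]
  {M N : Type*} [AddCommMonoid M] [Module R M] [AddCommMonoid N] [Module R N]

theorem LinearMap.range_baseChange (f : M →ₗ[R] N) :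
    range (f.baseChange A) = (range f).baseChange A := by
  have hf : f = (range f).subtype ∘ₗ f.rangeRestrict := rfl
  conv_lhs => rw [hf, baseChange_comp]
  exact range_comp_of_range_eq_top _
    (range_eq_top.mpr (baseChange_surjective _ f.surjective_rangeRestrict))

theorem Submodule.baseChange_map (f : M →ₗ[R] N) (p : Submodule R M) :
    (p.map f).baseChange A = (p.baseChange A).map (f.baseChange A) := by
  rw [← p.range_subtype, ← LinearMap.range_comp, ← LinearMap.range_baseChange,
    ← LinearMap.range_baseChange, LinearMap.baseChange_comp, LinearMap.range_comp]

end

section Flat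

variable {R : Type*} [CommRing R] (A : Type*) [Ring A] [Algebra R A] [Module.Flat R A]
  {M N : Type*} [AddCommGroup M] [Module R M] [AddCommGroup N] [Module R N]

theorem LinearMap.ker_baseChange (f : M →ₗ[R] N) :
    ker (f.baseChange A) = (ker f).baseChange A := by
  have hexact : Function.Exact ((ker f).subtype.baseChange A) (f.baseChange A) :=
    Module.Flat.lTensor_exact A (exact_subtype_ker_map f)
  exact exact_iff.mp hexact

namespace Submodule

theorem baseChange_comap (f : M →ₗ[R] N) (q : Submodule R N) :
    (q.comap f).baseChange A = (q.baseChange A).comap (f.baseChange A) := by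
  rw [← q.ker_mkQ, ← LinearMap.ker_comp, ← LinearMap.ker_baseChange, LinearMap.baseChange_comp,
    LinearMap.ker_comp, LinearMap.ker_baseChange]

theorem baseChange_inf (p q : Submodule R M) :
    (p ⊓ q).baseChange A = p.baseChange A ⊓ q.baseChange A := by
  rw [← map_comap_subtype, baseChange_map, baseChange_comap, map_comap_eq,
    LinearMap.range_baseChange, range_subtype]

end Submodule

end Flat

theorem strongly_irreducible_of_faithfully_flat_baseChange
    {R : Type*} [CommRing R] (T : Type*) [CommRing T] [Algebra R T]
    [Module.FaithfullyFlat R T]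
    {M : Type*} [AddCommGroup M] [Module R M] (N : Submodule R M)
    (hbc : ∀ K L : Submodule T (TensorProduct R T M),
      K ⊓ L ≤ N.baseChange T → K ≤ N.baseChange T ∨ L ≤ N.baseChange T) :
    ∀ K L : Submodule R M, K ⊓ L ≤ N → K ≤ N ∨ L ≤ N := by
  intro K L h
  have hKL : K.baseChange T ⊓ L.baseChange T ≤ N.baseChange T := by
    rw [← Submodule.baseChange_inf]
    exact Submodule.baseChange_mono T h
  simpa only [Submodule.baseChange_le_iff] using hbc _ _ hKL
end

section
/- A submodule N of an R-module M is strongly irreducible if and only if for all cyclic submodules Rx and Ry of M, the condition Rx ∩ Ry ⊆ N implies Rx ⊆ N or Ry ⊆ N. -/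
theorem strongly_irreducible_iff_cyclic
    {R : Type*} [CommRing R] {M : Type*} [AddCommGroup M] [Module R M]
    (N : Submodule R M) :
    (∀ K L : Submodule R M, K ⊓ L ≤ N → K ≤ N ∨ L ≤ N) ↔
      (∀ x y : M, Submodule.span R {x} ⊓ Submodule.span R {y} ≤ N →
        Submodule.span R {x} ≤ N ∨ Submodule.span R {y} ≤ N) := by
  constructor
  · intro h x y
    exact h _ _
  · intro h K L hKL
    by_cases hK : K ≤ N
    · exact Or.inl hK
    · right
      obtain ⟨x, hxK, hxN⟩ := SetLike.not_le_iff_exists.mp hK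
      intro y hyL
      have hspan : Submodule.span R {x} ⊓ Submodule.span R {y} ≤ N :=
        le_trans (inf_le_inf ((Submodule.span_singleton_le_iff_mem _ _).mpr hxK)
          ((Submodule.span_singleton_le_iff_mem _ _).mpr hyL)) hKL
      rcases h x y hspan with h1 | h2
      · exact absurd (h1 (Submodule.mem_span_singleton_self x)) hxN
      · exact h2 (Submodule.mem_span_singleton_self y)
end

section
/- Let (R, m) be a quasi-local ring (commutative ring with unique maximal ideal m) and M an R-module. If N is a strongly irreducible submodule of M with N ≠ (N :_M m), then the submodule (N :_M m) of M is cyclic. -/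
/-- The submodule (N : I) = {x in M | I • x ⊆ N}. -/
def Submodule.colonSubmodule {R : Type*} [CommRing R] {M : Type*} [AddCommGroup M]
    [Module R M] (N : Submodule R M) (I : Ideal R) : Submodule R M where
  carrier := {x | ∀ r ∈ I, r • x ∈ N}
  add_mem' := fun ha hb r hr => by
    simpa [smul_add] using N.add_mem (ha r hr) (hb r hr)
  zero_mem' := fun r hr => by simpa using N.zero_mem
  smul_mem' := fun c x hx r hr => by
    rw [smul_comm]; exact N.smul_mem c (hx r hr)

theorem colon_maximal_cyclic_of_strongly_irreducible
    {R : Type*} [CommRing R] [IsLocalRing R]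
    {M : Type*} [AddCommGroup M] [Module R M] (N : Submodule R M)
    (hsi : ∀ K L : Submodule R M, K ⊓ L ≤ N → K ≤ N ∨ L ≤ N)
    (hne : N ≠ N.colonSubmodule (IsLocalRing.maximalIdeal R)) :
    ∃ x : M, N.colonSubmodule (IsLocalRing.maximalIdeal R) =
      Submodule.span R {x} := by
  set m := IsLocalRing.maximalIdeal R with hm
  set C := N.colonSubmodule m with hC
  -- N ≤ C
  have hNC : N ≤ C := fun n hn r _ => N.smul_mem r hn
  -- pick x ∈ C \ N
  obtain ⟨x, hxC, hxN⟩ : ∃ x, x ∈ C ∧ x ∉ N := by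
    by_contra h
    push_neg at h
    exact hne (le_antisymm hNC (fun y hy => h y hy))
  -- key: any y ∈ C with y ∉ N lies in span {x}
  have key : ∀ y, y ∈ C → y ∉ N → y ∈ Submodule.span R {x} := by
    intro y hyC hyN
    have hnle : ¬ (Submodule.span R {x} ⊓ Submodule.span R {y} ≤ N) := by
      intro hle
      rcases hsi _ _ hle with h | h
      · exact hxN (h (Submodule.mem_span_singleton_self x))
      · exact hyN (h (Submodule.mem_span_singleton_self y))
    rw [SetLike.not_le_iff_exists] at hnle
    obtain ⟨z, hz, hzN⟩ := hnle
    obtain ⟨hzx, hzy⟩ := Submodule.mem_inf.mp hz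
    obtain ⟨b, rfl⟩ := Submodule.mem_span_singleton.mp hzx
    obtain ⟨a, hab⟩ := Submodule.mem_span_singleton.mp hzy
    -- b ∉ m, a ∉ m
    have hbu : IsUnit b := by
      by_contra hb
      exact hzN (hxC b hb)
    have hau : IsUnit a := by
      by_contra ha
      rw [← hab] at hzN
      exact hzN (hyC a ha)
    obtain ⟨u, rfl⟩ := hau
    have : y = (↑u⁻¹ * b) • x := by
      rw [mul_smul, ← hab, ← mul_smul, ← Units.val_mul, inv_mul_cancel, Units.val_one, one_smul]
    rw [this]
    exact Submodule.smul_mem _ _ (Submodule.mem_span_singleton_self x)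
  refine ⟨x, le_antisymm ?_ ?_⟩
  · intro y hyC
    by_cases hyN : y ∉ N
    · exact key y hyC hyN
    · push_neg at hyN
      have hxy : x + y ∈ C := C.add_mem hxC (hNC hyN)
      have hxyN : x + y ∉ N := fun h => hxN (by simpa using N.sub_mem h hyN)
      have := key _ hxy hxyN
      have hx' : x ∈ Submodule.span R {x} := Submodule.mem_span_singleton_self x
      simpa using Submodule.sub_mem _ this hx'
  · rw [Submodule.span_singleton_le_iff_mem]
    exact hxC
end

section
/- Let (R, m) be a quasi-local ring and M an R-module. If N is a strongly irreducible submodule of M with N ≠ (N :_M m), then N = m · (N :_M m). -/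
theorem eq_maximal_smul_colon_of_strongly_irreducible
    {R : Type*} [CommRing R] [IsLocalRing R]
    {M : Type*} [AddCommGroup M] [Module R M] (N : Submodule R M)
    (hsi : ∀ K L : Submodule R M, K ⊓ L ≤ N → K ≤ N ∨ L ≤ N)
    (hne : N ≠ N.colonSubmodule (IsLocalRing.maximalIdeal R)) :
    N = IsLocalRing.maximalIdeal R •
      N.colonSubmodule (IsLocalRing.maximalIdeal R) := by
  set m := IsLocalRing.maximalIdeal R with hm
  set C := N.colonSubmodule m with hCdef
  have memC : ∀ x : M, x ∈ C ↔ ∀ r ∈ m, r • x ∈ N := fun x => Iff.rfl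
  have hmCN : m • C ≤ N := Submodule.smul_le.2 fun r hr x hx => (memC x).1 hx r hr
  have hNC : N ≤ C := fun a ha => (memC a).2 fun r _ => N.smul_mem r ha
  have hlt : N < C := lt_of_le_of_ne hNC hne
  obtain ⟨c, hcC, hcN⟩ := SetLike.exists_of_lt hlt
  refine le_antisymm ?_ hmCN
  intro a haN
  by_contra hamc
  have haC : a ∈ C := hNC haN
  set K := m • C ⊔ Submodule.span R {a + c} with hK
  set L := m • C ⊔ Submodule.span R {c} with hL
  have hKL : K ⊓ L ≤ N := by
    rintro x ⟨hxK, hxL⟩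
    obtain ⟨y, hy, u, hu, rfl⟩ := Submodule.mem_sup.1 hxK
    obtain ⟨r, rfl⟩ := Submodule.mem_span_singleton.1 hu
    obtain ⟨z, hz, v, hv, hzv⟩ := Submodule.mem_sup.1 hxL
    obtain ⟨s, rfl⟩ := Submodule.mem_span_singleton.1 hv
    by_cases hr : IsUnit r
    · exfalso
      obtain ⟨ri, hri⟩ := hr.exists_left_inv
      have h1 : r • a = (z - y) + (s - r) • c := by
        have h := hzv
        rw [smul_add] at h
        -- h : z + s • c = y + (r • a + r • c)
        calc r • a = (y + (r • a + r • c)) - (y + r • c) := by abel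
          _ = (z + s • c) - (y + r • c) := by rw [h]
          _ = (z - y) + (s - r) • c := by rw [sub_smul]; abel
      have ha3 : a = ri • (z - y) + (ri * (s - r)) • c := by
        have : a = ri • (r • a) := by rw [smul_smul, hri, one_smul]
        rw [this, h1, smul_add, smul_smul]
      set w := ri • (z - y) with hw
      have hwmC : w ∈ m • C := Submodule.smul_mem _ ri (Submodule.sub_mem _ hz hy)
      set t := ri * (s - r) with ht
      have htc : t • c = a - w := (sub_eq_iff_eq_add'.2 ha3).symm
      have htcN : t • c ∈ N := htc ▸ N.sub_mem haN (hmCN hwmC)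
      by_cases htu : IsUnit t
      · obtain ⟨ti, hti⟩ := htu.exists_left_inv
        have : c ∈ N := by
          have h2 := N.smul_mem ti htcN
          rwa [smul_smul, hti, one_smul] at h2
        exact hcN this
      · have htm : t ∈ m := (IsLocalRing.mem_maximalIdeal t).2 (mem_nonunits_iff.2 htu)
        have : a ∈ m • C := by
          rw [ha3]
          exact Submodule.add_mem _ hwmC (Submodule.smul_mem_smul htm hcC)
        exact hamc this
    · have hrm : r ∈ m := (IsLocalRing.mem_maximalIdeal r).2 (mem_nonunits_iff.2 hr)
      exact N.add_mem (hmCN hy) ((memC (a + c)).1 (C.add_mem haC hcC) r hrm)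
  rcases hsi K L hKL with hKN | hLN
  · have hac : a + c ∈ N :=
      hKN (le_sup_right (α := Submodule R M) (Submodule.mem_span_singleton_self (a + c)))
    have : c ∈ N := by
      have := N.sub_mem hac haN
      rwa [add_sub_cancel_left] at this
    exact hcN this
  · exact hcN (hLN (le_sup_right (α := Submodule R M) (Submodule.mem_span_singleton_self c)))
end

section
/- Let (R, m) be a quasi-local ring and M an R-module. If N is a strongly irreducible submodule of M with N ≠ (N :_M m), then for every submodule K of M, either K ⊆ N or (N :_M m) ⊆ K. -/
theorem comparable_of_strongly_irreducible
    {R : Type*} [CommRing R] [IsLocalRing R]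
    {M : Type*} [AddCommGroup M] [Module R M] (N : Submodule R M)
    (hsi : ∀ K L : Submodule R M, K ⊓ L ≤ N → K ≤ N ∨ L ≤ N)
    (hne : N ≠ N.colonSubmodule (IsLocalRing.maximalIdeal R)) :
    ∀ K : Submodule R M,
      K ≤ N ∨ N.colonSubmodule (IsLocalRing.maximalIdeal R) ≤ K := by
  set m := IsLocalRing.maximalIdeal R with hm
  set C := N.colonSubmodule m with hC
  have hNC : N ≤ C := fun x hx r hr => N.smul_mem r hx
  have ht : ∃ t, t ∈ C ∧ t ∉ N := by
    by_contra h
    push_neg at h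
    exact hne (le_antisymm hNC h)
  obtain ⟨t, htC, htN⟩ := ht
  intro K
  by_cases hK : K ≤ N
  · exact Or.inl hK
  right
  -- step 1 : t ∈ K
  have htK : t ∈ K := by
    have h := hsi K (Submodule.span R {t})
    have hnot : ¬ K ⊓ Submodule.span R {t} ≤ N := by
      intro hle
      rcases h hle with h1 | h1
      · exact hK h1
      · exact htN (h1 (Submodule.mem_span_singleton_self t))
    obtain ⟨y, ⟨hyK, hyS⟩, hyN⟩ := Set.not_subset.mp hnot
    obtain ⟨r, rfl⟩ := Submodule.mem_span_singleton.mp hyS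
    have hrm : r ∉ m := fun hrm => hyN (htC r hrm)
    have hu : IsUnit r := by
      by_contra hu
      exact hrm ((IsLocalRing.mem_maximalIdeal r).mpr hu)
    obtain ⟨u, rfl⟩ := hu
    have := K.smul_mem (↑u⁻¹ : R) hyK
    simpa [smul_smul] using this
  -- step 2 : N ≤ K
  have hNK : N ≤ K := by
    intro n hn
    by_contra hnK
    have hsub : K ⊓ Submodule.span R {n + t} ≤ N := by
      rintro z ⟨hzK, hzS⟩
      obtain ⟨r, rfl⟩ := Submodule.mem_span_singleton.mp hzS
      by_cases hrm : r ∈ m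
      · have h1 : r • n ∈ N := N.smul_mem r hn
        have h2 : r • t ∈ N := htC r hrm
        simpa [smul_add] using N.add_mem h1 h2
      · exfalso
        have hu : IsUnit r := by
          by_contra hu
          exact hrm ((IsLocalRing.mem_maximalIdeal r).mpr hu)
        obtain ⟨u, rfl⟩ := hu
        have h1 : n + t ∈ K := by
          have := K.smul_mem (↑u⁻¹ : R) hzK
          simpa [smul_smul] using this
        have : n ∈ K := by
          have := K.sub_mem h1 htK
          simpa using this
        exact hnK this
    rcases hsi K (Submodule.span R {n + t}) hsub with h1 | h1
    · exact hK h1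
    · have : n + t ∈ N := h1 (Submodule.mem_span_singleton_self _)
      exact htN (by simpa using N.sub_mem this hn)
  -- step 3
  intro x hxC
  by_cases hxN : x ∈ N
  · exact hNK hxN
  · have hnot : ¬ K ⊓ Submodule.span R {x} ≤ N := by
      intro hle
      rcases hsi K (Submodule.span R {x}) hle with h1 | h1
      · exact hK h1
      · exact hxN (h1 (Submodule.mem_span_singleton_self x))
    obtain ⟨y, ⟨hyK, hyS⟩, hyN⟩ := Set.not_subset.mp hnot
    obtain ⟨r, rfl⟩ := Submodule.mem_span_singleton.mp hyS
    have hrm : r ∉ m := fun hrm => hyN (hxC r hrm)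
    have hu : IsUnit r := by
      by_contra hu
      exact hrm ((IsLocalRing.mem_maximalIdeal r).mpr hu)
    obtain ⟨u, rfl⟩ := hu
    have := K.smul_mem (↑u⁻¹ : R) hyK
    simpa [smul_smul] using this
end

section
/- Let (R, m) be a Noetherian local ring and M a finitely generated R-module. If N is a strongly irreducible submodule of M with Rad(N :_R M) = m, then N is sheltered: the set of submodules of M strictly containing N has a smallest element, namely (N :_M m). -/
/-!
Some power `m ^ n` kills `M / N`, so descending along `m ^ j • M` from `M ⊄ N` to `m ^ n • M ≤ N`
produces an element of `(N :_M m)` outside `N`. Conversely, if `z ∈ (N :_M m)` lies outside some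
`L > N`, then `R z ∩ L ≤ N`, because a multiple `r • z ∈ L` either has `r ∈ m`, so that
`r • z ∈ N`, or has `r` a unit, forcing `z ∈ L`; strong irreducibility then gives a contradiction.
-/

namespace Submodule

variable {R M : Type*} [CommRing R] [AddCommGroup M] [Module R M]

theorem le_colonSubmodule_iff {N P : Submodule R M} {I : Ideal R} :
    P ≤ N.colonSubmodule I ↔ I • P ≤ N :=
  ⟨fun h => smul_le.2 fun r hr _ hx => h hx r hr, fun h _ hx _ hr => h (smul_mem_smul hr hx)⟩

theorem le_colonSubmodule (N : Submodule R M) (I : Ideal R) : N ≤ N.colonSubmodule I :=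
  fun _ hx r _ => N.smul_mem r hx

theorem lt_colonSubmodule_of_pow_smul_top_le {N : Submodule R M} {I : Ideal R} {n : ℕ}
    (hn : I ^ n • (⊤ : Submodule R M) ≤ N) (hN : N ≠ ⊤) : N < N.colonSubmodule I := by
  refine (le_colonSubmodule N I).lt_of_ne fun hcol => hN (top_le_iff.1 ?_)
  induction n with
  | zero => simpa using hn
  | succ j ih =>
    refine ih (le_colonSubmodule_iff.2 ?_ |>.trans hcol.ge)
    rwa [← mul_smul, ← pow_succ']

theorem exists_pow_smul_top_le_of_le_radical_colon {N : Submodule R M} {I : Ideal R}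
    (hI : I.FG) (h : I ≤ (N.colon ⊤).radical) : ∃ n : ℕ, I ^ n • (⊤ : Submodule R M) ≤ N := by
  obtain ⟨n, hn⟩ := Ideal.exists_pow_le_of_le_radical_of_fg h hI
  exact ⟨n, smul_le.2 fun r hr x _ => mem_colon.1 (hn hr) x trivial⟩

theorem span_singleton_inf_le_of_mem_colonSubmodule_maximalIdeal [IsLocalRing R]
    {N L : Submodule R M} {z : M} (hz : z ∈ N.colonSubmodule (IsLocalRing.maximalIdeal R))
    (hzL : z ∉ L) : span R {z} ⊓ L ≤ N := by
  rintro _ ⟨hw, hwL⟩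
  obtain ⟨r, rfl⟩ := mem_span_singleton.1 hw
  by_cases hr : r ∈ IsLocalRing.maximalIdeal R
  · exact hz r hr
  · obtain ⟨u, rfl⟩ := IsLocalRing.notMem_maximalIdeal.1 hr
    exact absurd ((L.smul_mem_iff' u).1 hwL) hzL

end Submodule

theorem sheltered_of_strongly_irreducible_general
    {R : Type*} [CommRing R] [IsLocalRing R] [IsNoetherianRing R]
    {M : Type*} [AddCommGroup M] [Module R M]
    (N : Submodule R M)
    (hsi : ∀ K L : Submodule R M, K ⊓ L ≤ N → K ≤ N ∨ L ≤ N)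
    (hrad : (N.colon ⊤).radical = IsLocalRing.maximalIdeal R) :
    IsLeast {L : Submodule R M | N < L}
      (N.colonSubmodule (IsLocalRing.maximalIdeal R)) := by
  have hN : N ≠ ⊤ := by
    rintro rfl
    rw [Submodule.top_colon, Ideal.radical_top] at hrad
    exact (IsLocalRing.maximalIdeal.isMaximal R).ne_top hrad.symm
  obtain ⟨n, hn⟩ := Submodule.exists_pow_smul_top_le_of_le_radical_colon
    (IsNoetherian.noetherian _) hrad.ge
  refine ⟨Submodule.lt_colonSubmodule_of_pow_smul_top_le hn hN, fun L (hL : N < L) z hz => ?_⟩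
  by_contra hzL
  rcases hsi _ _ (Submodule.span_singleton_inf_le_of_mem_colonSubmodule_maximalIdeal hz hzL)
    with h | h
  · exact hzL (hL.le (h (Submodule.mem_span_singleton_self z)))
  · exact hL.not_ge h

theorem sheltered_of_strongly_irreducible
    {R : Type*} [CommRing R] [IsLocalRing R] [IsNoetherianRing R]
    {M : Type*} [AddCommGroup M] [Module R M] [Module.Finite R M]
    (N : Submodule R M)
    (hsi : ∀ K L : Submodule R M, K ⊓ L ≤ N → K ≤ N ∨ L ≤ N)
    (hrad : (N.colon ⊤).radical = IsLocalRing.maximalIdeal R) :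
    IsLeast {L : Submodule R M | N < L}
      (N.colonSubmodule (IsLocalRing.maximalIdeal R)) :=
  sheltered_of_strongly_irreducible_general N hsi hrad
end

section
/- An R-module M is distributive (the lattice of submodules is distributive) if and only if for all maximal ideals m of R, the submodules of the localized module M_m are linearly ordered by inclusion. -/
/-!
By Stephenson's criterion, the submodule lattice of `M` is distributive iff for all `x y : M`
the ideals `(Rx : y)` and `(Ry : x)` are comaximal: one direction applies distributivity to
`x + y ∈ (Rx + Ry) ∩ R(x + y)`, the other writes `k + l ∈ (K + L) ∩ N` as
`s(k + l) + t(k + l)` with `s ∈ (Rk : l)`, `t ∈ (Rl : k)` and `s + t = 1`. Comaximality can be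
tested at each maximal ideal `m`, and `(Rx : y) ⊄ m` says exactly that `y/1 ∈ Rₘ ∙ x/1` in `Mₘ`.
Every cyclic submodule of `Mₘ` is generated by some `x/1`, and a module is uniserial as soon as
its cyclic submodules are totally ordered, so the two conditions agree.
-/

open Submodule

namespace Submodule

section Distrib

variable {R M : Type*} [CommRing R] [AddCommGroup M] [Module R M]

theorem colon_sup_colon_eq_top_of_distrib
    (h : ∀ K L N : Submodule R M, (K ⊔ L) ⊓ N = (K ⊓ N) ⊔ (L ⊓ N)) (x y : M) :
    (R ∙ x).colon {y} ⊔ (R ∙ y).colon {x} = ⊤ := by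
  have hxy : x + y ∈ (R ∙ x ⊔ R ∙ y) ⊓ R ∙ (x + y) :=
    ⟨add_mem_sup (mem_span_singleton_self x) (mem_span_singleton_self y),
      mem_span_singleton_self _⟩
  rw [h, mem_sup] at hxy
  obtain ⟨u, hu, v, hv, hab⟩ := hxy
  obtain ⟨hax, a, rfl⟩ := (mem_inf.mp hu).imp_right mem_span_singleton.mp
  obtain ⟨hby, b, rfl⟩ := (mem_inf.mp hv).imp_right mem_span_singleton.mp
  have ha : a ∈ (R ∙ x).colon {y} := by
    rw [smul_add, (R ∙ x).add_mem_iff_right (smul_mem _ a (mem_span_singleton_self x))] at hax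
    exact mem_colon_singleton.mpr hax
  have hb : b ∈ (R ∙ y).colon {x} := by
    rw [smul_add, (R ∙ y).add_mem_iff_left (smul_mem _ b (mem_span_singleton_self y))] at hby
    exact mem_colon_singleton.mpr hby
  have hc : 1 - a - b ∈ (R ∙ x).colon {y} := by
    have : (1 - a - b) • y = -((1 - a - b) • x) := by
      linear_combination (norm := module) -hab
    rw [mem_colon_singleton, this]
    exact neg_mem (smul_mem _ _ (mem_span_singleton_self x))
  rw [Ideal.eq_top_iff_one, show (1 : R) = a + (1 - a - b) + b by ring]
  exact add_mem_sup (add_mem ha hc) hb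

theorem distrib_of_colon_sup_colon_eq_top
    (h : ∀ x y : M, (R ∙ x).colon {y} ⊔ (R ∙ y).colon {x} = ⊤) (K L N : Submodule R M) :
    (K ⊔ L) ⊓ N = (K ⊓ N) ⊔ (L ⊓ N) := by
  refine le_antisymm ?_
    (sup_le (inf_le_inf_right _ le_sup_left) (inf_le_inf_right _ le_sup_right))
  rintro n ⟨hn, hnN⟩
  obtain ⟨k, hk, l, hl, rfl⟩ := mem_sup.mp hn
  obtain ⟨s, hs, t, ht, hst⟩ := mem_sup.mp ((Ideal.eq_top_iff_one _).mp (h k l))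
  rw [mem_colon_singleton] at hs ht
  have hsK : s • (k + l) ∈ K :=
    smul_add s k l ▸ add_mem (smul_mem _ s hk) ((span_singleton_le_iff_mem k K).mpr hk hs)
  have htL : t • (k + l) ∈ L :=
    smul_add t k l ▸ add_mem ((span_singleton_le_iff_mem l L).mpr hl ht) (smul_mem _ t hl)
  rw [← one_smul R (k + l), ← hst, add_smul]
  exact add_mem_sup ⟨hsK, smul_mem _ s hnN⟩ ⟨htL, smul_mem _ t hnN⟩

theorem distrib_iff_colon_sup_colon_eq_top :
    (∀ K L N : Submodule R M, (K ⊔ L) ⊓ N = (K ⊓ N) ⊔ (L ⊓ N)) ↔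
      ∀ x y : M, (R ∙ x).colon {y} ⊔ (R ∙ y).colon {x} = ⊤ :=
  ⟨colon_sup_colon_eq_top_of_distrib, distrib_of_colon_sup_colon_eq_top⟩

end Distrib

theorem forall_le_or_le_iff_forall_span_singleton
    {R M : Type*} [Semiring R] [AddCommMonoid M] [Module R M] :
    (∀ K L : Submodule R M, K ≤ L ∨ L ≤ K) ↔
      ∀ x y : M, R ∙ x ≤ R ∙ y ∨ R ∙ y ≤ R ∙ x := by
  refine ⟨fun h x y ↦ h _ _, fun h K L ↦ or_iff_not_imp_left.mpr fun hKL y hyL ↦ ?_⟩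
  obtain ⟨x, hxK, hxL⟩ := SetLike.not_le_iff_exists.mp hKL
  rw [← span_singleton_le_iff_mem] at hxK hxL hyL ⊢
  exact ((h x y).resolve_left fun hxy ↦ hxL (hxy.trans hyL)).trans hxK

end Submodule

theorem Ideal.sup_eq_top_iff_forall_isMaximal {R : Type*} [CommSemiring R] (I J : Ideal R) :
    I ⊔ J = ⊤ ↔ ∀ m : Ideal R, m.IsMaximal → ¬ I ≤ m ∨ ¬ J ≤ m := by
  rw [← not_iff_not, ← Ne, ne_top_iff_exists_maximal]
  simp only [not_forall, not_or, not_not, sup_le_iff, exists_prop]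

namespace IsLocalizedModule

variable {R S M N : Type*} [CommSemiring R] [CommSemiring S] [AddCommMonoid M]
  [AddCommMonoid N] [Module R M] [Module R N] [Algebra R S] [Module S N] [IsScalarTower R S N]

section

variable (f : M →ₗ[R] N) (p : Submonoid R) [IsLocalization p S] [IsLocalizedModule p f]

theorem apply_mem_localized'_iff (P : Submodule R M) (x : M) :
    f x ∈ P.localized' S p f ↔ ∃ s : p, s • x ∈ P := by
  refine ⟨fun ⟨y, hy, s, hyx⟩ ↦ ?_, fun ⟨s, hs⟩ ↦ ⟨s • x, hs, s, mk'_cancel f x s⟩⟩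
  rw [← mk'_one p, mk'_eq_mk'_iff] at hyx
  obtain ⟨t, ht⟩ := hyx
  refine ⟨t * s, ?_⟩
  rw [mul_smul, ht, one_smul]
  exact P.smul_of_tower_mem t hy

theorem span_singleton_mk' (x : M) (s : p) : S ∙ mk' f x s = S ∙ f x := by
  refine le_antisymm ?_ ?_
  · have : mk' f x s = IsLocalization.mk' S (1 : R) s • f x := by
      rw [← mk'_one p f x, mk'_smul_mk', one_smul, mul_one]
    rw [span_singleton_le_iff_mem, this]
    exact smul_mem _ _ (mem_span_singleton_self _)
  · rw [span_singleton_le_iff_mem, ← mk'_cancel' f x s]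
    exact smul_of_tower_mem _ _ (mem_span_singleton_self _)

end

theorem forall_le_or_le_iff (f : M →ₗ[R] N) (p : Submonoid R) [IsLocalization p S]
    [IsLocalizedModule p f] :
    (∀ K L : Submodule S N, K ≤ L ∨ L ≤ K) ↔
      ∀ x y : M, S ∙ f x ≤ S ∙ f y ∨ S ∙ f y ≤ S ∙ f x := by
  rw [forall_le_or_le_iff_forall_span_singleton]
  refine ⟨fun h x y ↦ h _ _, fun h z w ↦ ?_⟩
  obtain ⟨⟨x, s⟩, rfl⟩ := mk'_surjective p f z
  obtain ⟨⟨y, t⟩, rfl⟩ := mk'_surjective p f w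
  simpa only [Function.uncurry_apply_pair, span_singleton_mk'] using h x y

variable (S) in
theorem span_singleton_le_span_singleton_iff_not_colon_le (f : M →ₗ[R] N) (m : Ideal R)
    [m.IsPrime] [IsLocalization m.primeCompl S] [IsLocalizedModule m.primeCompl f] (x y : M) :
    S ∙ f x ≤ S ∙ f y ↔ ¬ (R ∙ y).colon {x} ≤ m := by
  rw [span_singleton_le_iff_mem, ← Set.image_singleton, ← localized'_span S m.primeCompl f,
    apply_mem_localized'_iff, SetLike.not_le_iff_exists]
  exact ⟨fun ⟨⟨r, hrm⟩, hrx⟩ ↦ ⟨r, mem_colon_singleton.mpr hrx, hrm⟩,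
    fun ⟨r, hrx, hrm⟩ ↦ ⟨⟨r, hrm⟩, mem_colon_singleton.mp hrx⟩⟩

variable (S) in
theorem forall_le_or_le_iff_forall_not_colon_le (f : M →ₗ[R] N) (m : Ideal R) [m.IsPrime]
    [IsLocalization m.primeCompl S] [IsLocalizedModule m.primeCompl f] :
    (∀ K L : Submodule S N, K ≤ L ∨ L ≤ K) ↔
      ∀ x y : M, ¬ (R ∙ x).colon {y} ≤ m ∨ ¬ (R ∙ y).colon {x} ≤ m := by
  simp only [forall_le_or_le_iff f m.primeCompl,
    span_singleton_le_span_singleton_iff_not_colon_le S f m, or_comm]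

end IsLocalizedModule

theorem distributive_iff_arithmetical
    {R : Type*} [CommRing R] {M : Type*} [AddCommGroup M] [Module R M] :
    (∀ K L N : Submodule R M, (K ⊔ L) ⊓ N = (K ⊓ N) ⊔ (L ⊓ N)) ↔
      (∀ (m : Ideal R) [m.IsMaximal],
        ∀ K L : Submodule (Localization m.primeCompl)
          (LocalizedModule m.primeCompl M), K ≤ L ∨ L ≤ K) := by
  have hloc (m : Ideal R) [m.IsMaximal] :=
    IsLocalizedModule.forall_le_or_le_iff_forall_not_colon_le
      (Localization m.primeCompl) (LocalizedModule.mkLinearMap m.primeCompl M) m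
  simp only [distrib_iff_colon_sup_colon_eq_top, Ideal.sup_eq_top_iff_forall_isMaximal, hloc]
  exact ⟨fun h m _ x y ↦ h x y m ‹_›, fun h x y m _ ↦ h m x y⟩
end

section
/- An R-module M is arithmetical if and only if for all submodules K, L, N of M with N finitely generated, ((K + L) :_R N) = (K :_R N) + (L :_R N). -/
/-!
If every `M_m` is uniserial and `r N ⊆ K + L`, then at each maximal ideal `m` one of `K_m`, `L_m`
contains the other, say `K_m ⊆ L_m`; as `N` is finitely generated, a single `s ∉ m` then gives
`s r N ⊆ L`. So the ideal of `s` with `s r ∈ (K : N) + (L : N)` lies in no maximal ideal.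

Conversely, taking `K = Ra`, `L = Rb`, `N = Ra + Rb` gives `u + v = 1` with `u b ∈ Ra` and
`v a ∈ Rb`. At each maximal ideal one of `u`, `v` becomes a unit, so any two cyclic submodules of
`M_m` are comparable, and hence so are any two submodules.
-/

open Submodule
open scoped Pointwise

namespace Submodule

theorem le_total_of_span_singleton_le_total {R M : Type*} [Semiring R] [AddCommMonoid M]
    [Module R M] (h : ∀ x y : M, R ∙ x ≤ R ∙ y ∨ R ∙ y ≤ R ∙ x)
    (K L : Submodule R M) :
    K ≤ L ∨ L ≤ K := by
  by_contra! hKL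
  obtain ⟨x, hxK, hxL⟩ := SetLike.not_le_iff_exists.1 hKL.1
  obtain ⟨y, hyL, hyK⟩ := SetLike.not_le_iff_exists.1 hKL.2
  rcases h x y with hxy | hyx
  · exact hxL (hxy.trans ((span_singleton_le_iff_mem y L).2 hyL) (mem_span_singleton_self x))
  · exact hyK (hyx.trans ((span_singleton_le_iff_mem x K).2 hxK) (mem_span_singleton_self y))

variable {R M : Type*} [CommSemiring R] [AddCommMonoid M] [Module R M]

theorem mem_of_forall_isMaximal_exists_smul_mem {N : Submodule R M} {x : M}
    (h : ∀ (P : Ideal R) [P.IsMaximal], ∃ s ∉ P, s • x ∈ N) : x ∈ N := by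
  by_contra hx
  obtain ⟨P, _, hle⟩ := (N.colon {x}).exists_le_maximal (by simpa using hx)
  obtain ⟨s, hs, hsx⟩ := h P
  exact hs (hle (mem_colon_singleton.2 hsx))

theorem exists_add_eq_one_mem_colon_of_colon_sup_eq {a b : M}
    (h : (R ∙ a ⊔ R ∙ b).colon (span R {a, b}) =
      (R ∙ a).colon (span R {a, b}) + (R ∙ b).colon (span R {a, b})) :
    ∃ u v, u + v = 1 ∧ u ∈ (R ∙ a).colon (R ∙ b) ∧ v ∈ (R ∙ b).colon (R ∙ a) := by
  have h1 : (1 : R) ∈ (R ∙ a).colon (span R {a, b}) + (R ∙ b).colon (span R {a, b}) := by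
    rw [← h, (colon_eq_top_iff_subset _).2 (by rw [span_insert])]
    trivial
  obtain ⟨u, hu, v, hv, huv⟩ := mem_sup.1 h1
  exact ⟨u, v, huv, colon_mono le_rfl (span_mono (by simp)) hu,
    colon_mono le_rfl (span_mono (by simp)) hv⟩

theorem exists_mem_colon_of_finite {p : Submonoid R} {N : Submodule R M} {T : Set M}
    (hT : T.Finite) (h : ∀ x ∈ T, ∃ s ∈ p, s • x ∈ N) :
    ∃ s ∈ p, s ∈ N.colon T := by
  induction T, hT using Set.Finite.induction_on with
  | empty => exact ⟨1, p.one_mem, by simp⟩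
  | @insert a T _ _ ih =>
    obtain ⟨s, hs, hsa⟩ := h a (Set.mem_insert a T)
    obtain ⟨t, ht, htT⟩ := ih fun x hx ↦ h x (Set.mem_insert_of_mem a hx)
    refine ⟨s * t, p.mul_mem hs ht, ?_⟩
    rw [Set.insert_eq, colon_union]
    exact ⟨Ideal.mul_mem_right t _ (mem_colon_singleton.2 hsa), Ideal.mul_mem_left _ s htT⟩

variable {S N : Type*} [CommSemiring S] [AddCommMonoid N] [Module R N] [Algebra R S] [Module S N]
  [IsScalarTower R S N] {p : Submonoid R} [IsLocalization p S] {f : M →ₗ[R] N}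
  [IsLocalizedModule p f]

theorem exists_smul_mem_of_mem_localized₀ {Q : Submodule R M} {x : M}
    (hx : f x ∈ Q.localized₀ p f) : ∃ s ∈ p, s • x ∈ Q := by
  obtain ⟨a, ha, s, e⟩ := hx
  rw [← IsLocalizedModule.mk'_one p, IsLocalizedModule.mk'_eq_mk'_iff] at e
  obtain ⟨t, ht⟩ := e
  simp only [smul_smul, one_smul] at ht
  exact ⟨t * s, (t * s).2, ht ▸ Q.smul_mem t ha⟩

theorem exists_mul_mem_colon_of_localized'_le {K L N : Submodule R M}
    (hKL : K.localized' S p f ≤ L.localized' S p f) (hN : N.FG) {r : R}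
    (hr : r ∈ (K ⊔ L).colon N) : ∃ s ∈ p, s * r ∈ L.colon N := by
  obtain ⟨T, rfl⟩ := hN
  have hloc : (K ⊔ L).localized' S p f = L.localized' S p f := by
    rw [(localized'gi S p f).gc.l_sup, sup_eq_right.2 hKL]
  have h : ∀ x ∈ r • (T : Set M), ∃ s ∈ p, s • x ∈ L := by
    rintro _ ⟨x, hx, rfl⟩
    refine exists_smul_mem_of_mem_localized₀ (f := f) ?_
    change f (r • x) ∈ L.localized' S p f
    exact hloc ▸ ⟨r • x, mem_colon.1 hr x (subset_span hx), 1, by simp⟩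
  obtain ⟨s, hs, hsT⟩ := exists_mem_colon_of_finite ((T.finite_toSet).smul_set) h
  refine ⟨s, hs, ?_⟩
  rw [colon_span, mem_colon]
  intro x hx
  rw [mul_smul]
  exact mem_colon.1 hsT _ ⟨x, hx, rfl⟩

theorem span_singleton_le_of_mem_colon {a b : M} {u : R} (hu : u ∈ p)
    (h : u ∈ (R ∙ a).colon (R ∙ b)) : S ∙ f b ≤ S ∙ f a := by
  simpa [localized'_span] using
    localized'_le_localized'_of_smul_le S p f ⟨u, hu⟩ (mem_colon_iff_le.1 h)

theorem span_singleton_le_total_of_add_eq_one {P : Ideal R} [P.IsPrime]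
    [IsLocalization.AtPrime S P] [IsLocalizedModule P.primeCompl f] {a b : M} {u v : R}
    (huv : u + v = 1) (hu : u ∈ (R ∙ a).colon (R ∙ b))
    (hv : v ∈ (R ∙ b).colon (R ∙ a)) :
    S ∙ f a ≤ S ∙ f b ∨ S ∙ f b ≤ S ∙ f a := by
  by_cases huP : u ∈ P
  · have hvP : v ∉ P := fun hvP ↦ Ideal.IsPrime.one_notMem ‹_› (huv ▸ P.add_mem huP hvP)
    exact .inl (span_singleton_le_of_mem_colon (p := P.primeCompl) hvP hv)
  · exact .inr (span_singleton_le_of_mem_colon (p := P.primeCompl) huP hu)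

end Submodule

theorem IsLocalizedModule.span_singleton_mk'_s14 {R M S N : Type*} [CommSemiring R] [AddCommMonoid M]
    [Module R M] [CommSemiring S] [AddCommMonoid N] [Module R N] [Algebra R S] [Module S N]
    [IsScalarTower R S N] (p : Submonoid R) [IsLocalization p S] (f : M →ₗ[R] N)
    [IsLocalizedModule p f] (a : M) (s : p) : S ∙ mk' f a s = S ∙ f a := by
  rw [← mk'_cancel' f a s, Submonoid.smul_def, ← algebraMap_smul S (s : R),
    span_singleton_smul_eq (IsLocalization.map_units S s)]

theorem arithmetical_iff_colon_sup
    {R : Type*} [CommRing R] {M : Type*} [AddCommGroup M] [Module R M] :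
    (∀ (m : Ideal R) [m.IsMaximal],
        ∀ K L : Submodule (Localization m.primeCompl)
          (LocalizedModule m.primeCompl M), K ≤ L ∨ L ≤ K) ↔
      (∀ K L N : Submodule R M, N.FG →
        (K ⊔ L).colon N = K.colon N + L.colon N) := by
  constructor
  · intro hA K L N hN
    refine le_antisymm (fun r hr ↦ ?_)
      (sup_le (colon_mono le_sup_left subset_rfl) (colon_mono le_sup_right subset_rfl))
    refine mem_of_forall_isMaximal_exists_smul_mem fun P _ ↦ ?_
    rcases hA P (K.localized P.primeCompl) (L.localized P.primeCompl) with hKL | hLK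
    · obtain ⟨s, hs, hsr⟩ := exists_mul_mem_colon_of_localized'_le hKL hN hr
      exact ⟨s, hs, mem_sup_right hsr⟩
    · obtain ⟨s, hs, hsr⟩ := exists_mul_mem_colon_of_localized'_le hLK hN (sup_comm K L ▸ hr)
      exact ⟨s, hs, mem_sup_left hsr⟩
  · intro h m _
    refine le_total_of_span_singleton_le_total fun x y ↦ ?_
    obtain ⟨⟨a, s⟩, rfl⟩ := IsLocalizedModule.mk'_surjective m.primeCompl
      (LocalizedModule.mkLinearMap m.primeCompl M) x
    obtain ⟨⟨b, t⟩, rfl⟩ := IsLocalizedModule.mk'_surjective m.primeCompl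
      (LocalizedModule.mkLinearMap m.primeCompl M) y
    obtain ⟨u, v, huv, hu, hv⟩ := exists_add_eq_one_mem_colon_of_colon_sup_eq
      (h _ _ _ (fg_span (Set.toFinite {a, b})))
    simpa only [Function.uncurry_apply_pair, IsLocalizedModule.span_singleton_mk'_s14] using
      span_singleton_le_total_of_add_eq_one (P := m) huv hu hv
end

section
/- In an arithmetical R-module M, a submodule N is strongly irreducible if and only if N is irreducible. -/
open IsLocalizedModule

section aux

variable {R M N : Type*} [CommSemiring R] [AddCommMonoid M] [AddCommMonoid N]
  [Module R M] [Module R N] (p : Submonoid R) (f : M →ₗ[R] N) [IsLocalizedModule p f]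

lemma localized₀_sup_aux (K L : Submodule R M) :
    (K ⊔ L).localized₀ p f = K.localized₀ p f ⊔ L.localized₀ p f := by
  apply le_antisymm
  · rintro x ⟨m, hm, s, rfl⟩
    obtain ⟨k, hk, l, hl, rfl⟩ := Submodule.mem_sup.mp hm
    rw [mk'_add]
    exact Submodule.add_mem_sup ⟨k, hk, s, rfl⟩ ⟨l, hl, s, rfl⟩
  · exact sup_le
      (fun x ⟨m, hm, s, hs⟩ => ⟨m, Submodule.mem_sup_left hm, s, hs⟩)
      (fun x ⟨m, hm, s, hs⟩ => ⟨m, Submodule.mem_sup_right hm, s, hs⟩)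

lemma localized₀_inf_aux (K L : Submodule R M) :
    (K ⊓ L).localized₀ p f = K.localized₀ p f ⊓ L.localized₀ p f := by
  apply le_antisymm
  · exact le_inf
      (fun x ⟨m, hm, s, hs⟩ => ⟨m, hm.1, s, hs⟩)
      (fun x ⟨m, hm, s, hs⟩ => ⟨m, hm.2, s, hs⟩)
  · rintro x ⟨⟨k, hk, s, rfl⟩, ⟨l, hl, t, hlt⟩⟩
    obtain ⟨u, hu⟩ := (mk'_eq_mk'_iff f l k t s).mp hlt
    refine ⟨u • t • k, ⟨Submodule.smul_mem _ _ (Submodule.smul_mem _ _ hk),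
      hu ▸ Submodule.smul_mem _ _ (Submodule.smul_mem _ _ hl)⟩, u * (t * s), ?_⟩
    rw [mk'_cancel_left, mk'_cancel_left]

end aux

theorem strongly_irreducible_iff_irreducible_of_arithmetical
    {R : Type*} [CommRing R] {M : Type*} [AddCommGroup M] [Module R M]
    (harith : ∀ (m : Ideal R) [m.IsMaximal],
      ∀ K L : Submodule (Localization m.primeCompl)
        (LocalizedModule m.primeCompl M), K ≤ L ∨ L ≤ K)
    (N : Submodule R M) :
    (∀ K L : Submodule R M, K ⊓ L ≤ N → K ≤ N ∨ L ≤ N) ↔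
      (∀ K L : Submodule R M, N = K ⊓ L → N = K ∨ N = L) := by
  constructor
  · intro h K L hN
    rcases h K L (le_of_eq hN.symm) with hK | hL
    · exact Or.inl (le_antisymm (hN ▸ inf_le_left) hK)
    · exact Or.inr (le_antisymm (hN ▸ inf_le_right) hL)
  · intro h K L hKL
    have key : N = (N ⊔ K) ⊓ (N ⊔ L) := by
      apply Submodule.eq_of_localization₀_maximal
        (fun P _ => LocalizedModule P.primeCompl M)
        (fun P _ => LocalizedModule.mkLinearMap P.primeCompl M)
      intro P hP
      set f := LocalizedModule.mkLinearMap P.primeCompl M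
      have hcomp : K.localized₀ P.primeCompl f ≤ L.localized₀ P.primeCompl f ∨
          L.localized₀ P.primeCompl f ≤ K.localized₀ P.primeCompl f := by
        rcases harith P (K.localized' (Localization P.primeCompl) P.primeCompl f)
          (L.localized' (Localization P.primeCompl) P.primeCompl f) with hle | hle
        · exact Or.inl fun x hx => hle hx
        · exact Or.inr fun x hx => hle hx
      have hNloc : N.localized₀ P.primeCompl f =
          N.localized₀ P.primeCompl f ⊔
            (K.localized₀ P.primeCompl f ⊓ L.localized₀ P.primeCompl f) := by
        rw [← localized₀_inf_aux, ← localized₀_sup_aux,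
          sup_eq_left.mpr hKL]
      rw [localized₀_inf_aux, localized₀_sup_aux, localized₀_sup_aux]
      rcases hcomp with hle | hle
      · rw [inf_eq_left.mpr hle] at hNloc
        rw [inf_eq_left.mpr (sup_le_sup_left hle _)]
        exact hNloc
      · rw [inf_eq_right.mpr hle] at hNloc
        rw [inf_eq_right.mpr (sup_le_sup_left hle _)]
        exact hNloc
    rcases h (N ⊔ K) (N ⊔ L) key with hK | hL
    · exact Or.inl (le_sup_right.trans hK.ge)
    · exact Or.inr (le_sup_right.trans hL.ge)
end

section
/- Let (R, m) be a Noetherian local ring and M a finitely generated R-module. Suppose N is a strongly irreducible submodule of M with mM ≠ N and Rad(N :_R M) = m. Then N is comparable by inclusion to every submodule of M, and moreover N = ⋃{K : K submodule of M with K ⊊ (N :_M m)} and (N :_M m) = ⋂{L : L submodule of M with N ⊊ L}. -/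
theorem comparable_and_union_inter_of_strongly_irreducible
    {R : Type*} [CommRing R] [IsLocalRing R] [IsNoetherianRing R]
    {M : Type*} [AddCommGroup M] [Module R M] [Module.Finite R M]
    (N : Submodule R M)
    (hsi : ∀ K L : Submodule R M, K ⊓ L ≤ N → K ≤ N ∨ L ≤ N)
    (hmM : IsLocalRing.maximalIdeal R • (⊤ : Submodule R M) ≠ N)
    (hrad : (N.colon ⊤).radical = IsLocalRing.maximalIdeal R) :
    (∀ K : Submodule R M, K ≤ N ∨ N ≤ K) ∧
    ((N : Set M) =
      ⋃ K ∈ {K : Submodule R M |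
        K < N.colonSubmodule (IsLocalRing.maximalIdeal R)}, (K : Set M)) ∧
    (((N.colonSubmodule (IsLocalRing.maximalIdeal R)) : Set M) =
      ⋂ L ∈ {L : Submodule R M | N < L}, (L : Set M)) := by
  classical
  set m : Ideal R := IsLocalRing.maximalIdeal R with hm
  -- membership in colonSubmodule
  have mem_cs : ∀ x : M, x ∈ N.colonSubmodule m ↔ ∀ r ∈ m, r • x ∈ N := fun x => Iff.rfl
  -- a power of m kills M/N
  obtain ⟨n, hn⟩ : ∃ n, m ^ n • (⊤ : Submodule R M) ≤ N := by
    obtain ⟨n, hn⟩ := Ideal.exists_radical_pow_le_of_fg (N.colon ⊤)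
      (IsNoetherian.noetherian _)
    rw [hrad] at hn
    refine ⟨n, Submodule.smul_le.mpr fun r hr x _ => ?_⟩
    exact Submodule.mem_colon.mp (hn hr) x trivial
  -- socle element extraction
  have socle : ∀ P : Submodule R M, ¬ P ≤ N →
      ∃ u, u ∈ P ∧ u ∉ N ∧ ∀ r ∈ m, r • u ∈ N := by
    intro P hP
    have hex : ∃ t, m ^ t • P ≤ N :=
      ⟨n, le_trans (smul_mono_right _ le_top) hn⟩
    have ht : m ^ Nat.find hex • P ≤ N := Nat.find_spec hex
    have ht0 : Nat.find hex ≠ 0 := by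
      intro h
      rw [h, pow_zero, Ideal.one_eq_top, Submodule.top_smul] at ht
      exact hP ht
    obtain ⟨t', htt⟩ := Nat.exists_eq_succ_of_ne_zero ht0
    have hlt : ¬ m ^ t' • P ≤ N := Nat.find_min hex (htt ▸ Nat.lt_succ_self t')
    obtain ⟨u, hu, hun⟩ := SetLike.not_le_iff_exists.mp hlt
    refine ⟨u, Submodule.smul_le_right hu, hun, fun r hr => ?_⟩
    have h1 : r • u ∈ m • (m ^ t' • P) := Submodule.smul_mem_smul hr hu
    rw [← mul_smul, ← pow_succ'] at h1
    have ht' : m ^ (t' + 1) • P ≤ N := by rw [← Nat.succ_eq_add_one, ← htt]; exact ht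
    exact ht' h1
  -- comparability
  have comp : ∀ K : Submodule R M, K ≤ N ∨ N ≤ K := by
    intro K
    by_cases hK : K ≤ N
    · exact Or.inl hK
    · right
      intro z hz
      by_contra hzK
      obtain ⟨u, huK, huN, hum⟩ := socle K hK
      have hint : K ⊓ Submodule.span R {u + z} ≤ N := by
        rintro v ⟨hvK, hvy⟩
        obtain ⟨r, rfl⟩ := Submodule.mem_span_singleton.mp hvy
        by_cases hr : IsUnit r
        · exfalso
          apply hzK
          obtain ⟨c, rfl⟩ := hr
          have h1 : (c : R) • z = (c : R) • (u + z) - (c : R) • u := by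
            rw [smul_add]; abel
          have h2 : (c : R) • z ∈ K := by
            rw [h1]; exact K.sub_mem hvK (K.smul_mem _ huK)
          have h3 : z = (↑c⁻¹ : R) • ((c : R) • z) := by
            rw [smul_smul, ← Units.val_mul, inv_mul_cancel, Units.val_one, one_smul]
          rw [h3]; exact K.smul_mem _ h2
        · have hrm : r ∈ m := hr
          rw [smul_add]
          exact N.add_mem (hum r hrm) (N.smul_mem r hz)
      rcases hsi _ _ hint with h | h
      · exact hK h
      · have hyN : u + z ∈ N := h (Submodule.mem_span_singleton_self _)
        exact huN (by simpa using N.sub_mem hyN hz)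
  -- key lemma: every element of (N :ₘ m) \ N lies in N ⊔ Rx for any x ∉ N
  have keyC : ∀ x y : M, x ∉ N → y ∈ N.colonSubmodule m → y ∉ N →
      y ∈ N ⊔ Submodule.span R {x} := by
    intro x y hx hy hyN
    by_contra hy'
    have hint : (N ⊔ Submodule.span R {x}) ⊓ (N ⊔ Submodule.span R {y}) ≤ N := by
      rintro v ⟨hv1, hv2⟩
      obtain ⟨n2, hn2, w, hw, rfl⟩ := Submodule.mem_sup.mp hv2
      obtain ⟨b, rfl⟩ := Submodule.mem_span_singleton.mp hw
      by_cases hb : IsUnit b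
      · exfalso
        apply hy'
        obtain ⟨c, rfl⟩ := hb
        have h1 : (c : R) • y = (n2 + (c : R) • y) - n2 := by abel
        have h2 : (c : R) • y ∈ N ⊔ Submodule.span R {x} := by
          rw [h1]
          exact Submodule.sub_mem _ hv1 (Submodule.mem_sup_left hn2)
        have h3 : y = (↑c⁻¹ : R) • ((c : R) • y) := by
          rw [smul_smul, ← Units.val_mul, inv_mul_cancel, Units.val_one, one_smul]
        rw [h3]; exact Submodule.smul_mem _ _ h2
      · have hbm : b ∈ m := hb
        exact N.add_mem hn2 (hy b hbm)
    rcases hsi _ _ hint with h | h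
    · exact hx (h (Submodule.mem_sup_right (Submodule.mem_span_singleton_self _)))
    · exact hyN (h (Submodule.mem_sup_right (Submodule.mem_span_singleton_self _)))
  -- N is strictly contained in (N :ₘ m)
  have hNtop : ¬ (⊤ : Submodule R M) ≤ N := by
    intro h
    have hc : N.colon ⊤ = ⊤ := by
      rw [eq_top_iff]
      intro r _
      exact Submodule.mem_colon.mpr fun p hp => h (Submodule.mem_top)
    rw [hc] at hrad
    refine (IsLocalRing.maximalIdeal.isMaximal R).ne_top ?_
    rw [← hm, ← hrad, eq_top_iff]
    exact le_trans le_top Ideal.le_radical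
  have hNle : N ≤ N.colonSubmodule m := fun x hx r _ => N.smul_mem r hx
  have hNlt : N < N.colonSubmodule m := by
    obtain ⟨u, _, huN, hum⟩ := socle ⊤ hNtop
    refine lt_of_le_of_ne hNle fun h => huN ?_
    rw [h]
    exact hum
  refine ⟨comp, ?_, ?_⟩
  · -- union statement
    ext x
    simp only [SetLike.mem_coe, Set.mem_iUnion, Set.mem_setOf_eq, exists_prop]
    constructor
    · intro hx
      exact ⟨N, hNlt, hx⟩
    · rintro ⟨K, hK, hxK⟩
      rcases comp K with h | h
      · exact h hxK
      · by_contra hxN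
        refine hK.not_ge fun y hy => ?_
        by_cases hyN : y ∈ N
        · exact h hyN
        · have hyx := keyC x y hxN hy hyN
          refine (sup_le h (Submodule.span_le.mpr ?_)) hyx
          simpa using hxK
  · -- intersection statement
    ext y
    simp only [SetLike.mem_coe, Set.mem_iInter, Set.mem_setOf_eq]
    constructor
    · intro hy L hL
      by_cases hyN : y ∈ N
      · exact hL.le hyN
      · obtain ⟨z, hzL, hzN⟩ := SetLike.exists_of_lt hL
        have hyz := keyC z y hzN hy hyN
        refine (sup_le hL.le (Submodule.span_le.mpr ?_)) hyz
        simpa using hzL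
    · intro h
      exact h _ hNlt
end

section
/- Let R be a Noetherian ring and M a finitely generated R-module with dim M = 1. If N is a strongly irreducible submodule of M such that the ideal (N :_R M) contains an element which is regular on M (a non-zerodivisor on M), then N is a distributive submodule: for all submodules K, L of M, (K ∩ L) + N = (K + N) ∩ (L + N). -/
section Aux

variable {R : Type*} [CommRing R] {M : Type*} [AddCommGroup M] [Module R M]

/-- The submodule `(N :ₘ A) = {x | A • x ⊆ N}`. -/
def colonSM (A : Ideal R) (N : Submodule R M) : Submodule R M where
  carrier := {x | ∀ a ∈ A, a • x ∈ N}
  add_mem' := fun hx hy a ha => by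
    rw [smul_add]; exact N.add_mem (hx a ha) (hy a ha)
  zero_mem' := fun a ha => by rw [smul_zero]; exact N.zero_mem
  smul_mem' := fun c x hx a ha => by
    rw [smul_comm]; exact N.smul_mem c (hx a ha)

lemma mem_colonSM {A : Ideal R} {N : Submodule R M} {x : M} :
    x ∈ colonSM A N ↔ ∀ a ∈ A, a • x ∈ N := Iff.rfl

/-- Powers of an `M`-regular element are `M`-regular. -/
lemma regular_pow {r : R} (hr : ∀ x : M, r • x = 0 → x = 0) :
    ∀ (n : ℕ) (x : M), r ^ n • x = 0 → x = 0 := by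
  intro n
  induction n with
  | zero => intro x hx; simpa using hx
  | succ n ih =>
    intro x hx
    apply ih x
    apply hr (r ^ n • x)
    rw [← mul_smul, ← pow_succ']
    exact hx

/-- A regular element is not in any minimal prime over the annihilator. -/
lemma regular_notMem_minimal {r : R}
    (hr : ∀ x : M, r • x = 0 → x = 0)
    {p : Ideal R} (hp : p ∈ (Module.annihilator R M).minimalPrimes) :
    r ∉ p := by
  intro hrp
  have hpprime : p.IsPrime := hp.1.1
  have hannp : Module.annihilator R M ≤ p := hp.1.2
  -- the multiplicative set {s * r ^ n | s ∉ p}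
  set T : Submonoid R :=
    { carrier := {x | ∃ s, s ∉ p ∧ ∃ n : ℕ, x = s * r ^ n}
      mul_mem' := by
        rintro x y ⟨s, hs, n, rfl⟩ ⟨s', hs', n', rfl⟩
        refine ⟨s * s', fun h => ?_, n + n', by ring⟩
        rcases hpprime.mem_or_mem h with h | h
        · exact hs h
        · exact hs' h
      one_mem' := ⟨1, fun h => hpprime.ne_top (p.eq_top_iff_one.mpr h), 0, by ring⟩ } with hT
  have hdisj : Disjoint ((Module.annihilator R M : Ideal R) : Set R) (T : Set R) := by
    rw [Set.disjoint_left]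
    rintro x hxann ⟨s, hs, n, rfl⟩
    apply hs
    apply hannp
    have hxann' : s * r ^ n ∈ Module.annihilator R M := hxann
    rw [Module.mem_annihilator] at hxann' ⊢
    intro m
    apply regular_pow hr n
    have := hxann' m
    rw [mul_comm, mul_smul] at this
    exact this
  obtain ⟨q, hqprime, hannq, hdisjq⟩ :=
    Ideal.exists_le_prime_disjoint (Module.annihilator R M) T hdisj
  have hqp : q ≤ p := by
    intro c hc
    by_contra hcp
    exact Set.disjoint_left.mp hdisjq hc ⟨c, hcp, 0, by ring⟩
  have hpq : p ≤ q := hp.2 ⟨hqprime, hannq⟩ hqp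
  exact Set.disjoint_left.mp hdisjq (hpq hrp) ⟨1, fun h => hpprime.ne_top (p.eq_top_iff_one.mpr h), 1, by ring⟩

end Aux

section Max

variable {R : Type*} [CommRing R] [IsNoetherianRing R]
  {M : Type*} [AddCommGroup M] [Module R M]

/-- If the Krull dimension of `R / ann M` is one and `r` is regular on `M`, then
every prime containing `ann M + (r)` is maximal. -/
lemma prime_over_reg_isMaximal
    (hdim : ringKrullDim (R ⧸ Module.annihilator R M) = 1)
    {r : R} (hr : ∀ x : M, r • x = 0 → x = 0)
    {p : Ideal R} (hpprime : p.IsPrime)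
    (hle : Module.annihilator R M ⊔ Ideal.span {r} ≤ p) :
    p.IsMaximal := by
  by_contra hnm
  have hannp : Module.annihilator R M ≤ p := le_trans le_sup_left hle
  have hrp : r ∈ p := hle (le_sup_right (α := Ideal R)
    (Ideal.subset_span (Set.mem_singleton r)))
  obtain ⟨p₀, hp₀, hp₀p⟩ := Ideal.exists_minimalPrimes_le (I := Module.annihilator R M) hannp
  have hrp₀ : r ∉ p₀ := regular_notMem_minimal hr hp₀
  have hp₀lt : p₀ < p := lt_of_le_of_ne hp₀p (fun h => hrp₀ (h ▸ hrp))
  obtain ⟨q, hqmax, hpq⟩ := Ideal.exists_le_maximal p hpprime.ne_top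
  have hplt : p < q := lt_of_le_of_ne hpq (fun h => hnm (h ▸ hqmax))
  -- build a chain of length 2 in Spec (R / ann M)
  set A := Module.annihilator R M with hA
  set f := Ideal.Quotient.mk A with hf
  have hker : RingHom.ker f = A := Ideal.mk_ker
  have hsurj : Function.Surjective f := Ideal.Quotient.mk_surjective
  have hmapprime : ∀ (P : Ideal R), P.IsPrime → A ≤ P → (P.map f).IsPrime := by
    intro P hP hAP
    exact Ideal.map_isPrime_of_surjective hsurj (by rw [hker]; exact hAP)
  have hstrict : ∀ (P Q : Ideal R), A ≤ P → A ≤ Q → P < Q → P.map f < Q.map f := by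
    intro P Q hAP hAQ hPQ
    refine lt_of_le_of_ne (Ideal.map_mono hPQ.le) (fun h => ?_)
    have h1 : Ideal.comap f (Ideal.map f P) = P := by
      rw [Ideal.comap_map_of_surjective f hsurj, ← RingHom.ker_eq_comap_bot, hker,
        sup_eq_left.mpr hAP]
    have h2 : Ideal.comap f (Ideal.map f Q) = Q := by
      rw [Ideal.comap_map_of_surjective f hsurj, ← RingHom.ker_eq_comap_bot, hker,
        sup_eq_left.mpr hAQ]
    rw [← h1, ← h2, h] at hPQ
    exact lt_irrefl _ hPQ
  have hAq : A ≤ q := le_trans hannp hpq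
  set x0 : PrimeSpectrum (R ⧸ A) := ⟨p₀.map f, hmapprime p₀ hp₀.1.1 hp₀.1.2⟩ with hx0
  set x1 : PrimeSpectrum (R ⧸ A) := ⟨p.map f, hmapprime p hpprime hannp⟩ with hx1
  set x2 : PrimeSpectrum (R ⧸ A) := ⟨q.map f, hmapprime q hqmax.isPrime hAq⟩ with hx2
  have h01 : x0 < x1 := by
    rw [← PrimeSpectrum.asIdeal_lt_asIdeal]
    exact hstrict p₀ p hp₀.1.2 hannp hp₀lt
  have h12 : x1 < x2 := by
    rw [← PrimeSpectrum.asIdeal_lt_asIdeal]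
    exact hstrict p q hannp hAq hplt
  set c : LTSeries (PrimeSpectrum (R ⧸ A)) :=
    ⟨2, ![x0, x1, x2], by
      intro i
      fin_cases i
      · exact h01
      · exact h12⟩ with hc
  have hlen := Order.LTSeries.length_le_krullDim c
  rw [show ringKrullDim (R ⧸ A) = Order.krullDim (PrimeSpectrum (R ⧸ A)) from rfl] at hdim
  rw [hdim] at hlen
  norm_num [hc] at hlen

end Max

section Split

variable {R : Type*} [CommRing R] {M : Type*} [AddCommGroup M] [Module R M]

/-- From a product of powers of maximal ideals killing `M/N` and strong irreducibility,
extract a single maximal ideal whose power kills `M/N`. -/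
lemma split_max (N : Submodule R M)
    (hsi : ∀ K L : Submodule R M, K ⊓ L ≤ N → K ≤ N ∨ L ≤ N)
    (hNtop : N ≠ ⊤) (n : ℕ)
    (s : Finset (Ideal R)) (hmax : ∀ m ∈ s, m.IsMaximal)
    (hprod : (∏ m ∈ s, m ^ n) • (⊤ : Submodule R M) ≤ N) :
    ∃ m : Ideal R, m.IsMaximal ∧ m ^ n • (⊤ : Submodule R M) ≤ N := by
  classical
  induction s using Finset.induction_on with
  | empty =>
    exfalso
    apply hNtop
    rw [eq_top_iff]
    simpa using hprod
  | @insert m s hm ih =>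
    set A := m ^ n with hA
    set B := ∏ p ∈ s, p ^ n with hB
    have hmmax : m.IsMaximal := hmax m (Finset.mem_insert_self m s)
    have hsmax : ∀ p ∈ s, p.IsMaximal := fun p hp => hmax p (Finset.mem_insert_of_mem hp)
    have hABprod : (A * B) • (⊤ : Submodule R M) ≤ N := by
      rwa [Finset.prod_insert hm] at hprod
    have hcomax : A ⊔ B = ⊤ := by
      by_contra hne
      obtain ⟨q, hqmax, hq⟩ := Ideal.exists_le_maximal _ hne
      have hAq : A ≤ q := le_trans le_sup_left hq
      have hBq : B ≤ q := le_trans le_sup_right hq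
      have hmq : m ≤ q := hqmax.isPrime.le_of_pow_le hAq
      have hmqe : m = q := hmmax.eq_of_le hqmax.ne_top hmq
      obtain ⟨i, hi, hiq⟩ := (hqmax.isPrime.prod_le).mp hBq
      have hiqle : i ≤ q := hqmax.isPrime.le_of_pow_le hiq
      have : i = q := (hsmax i hi).eq_of_le hqmax.ne_top hiqle
      rw [← hmqe] at this
      exact hm (this ▸ hi)
    obtain ⟨a, ha, b, hb, hab⟩ := Submodule.mem_sup.mp
      (show (1 : R) ∈ A ⊔ B by rw [hcomax]; trivial)
    have hKL : colonSM A N ⊓ colonSM B N ≤ N := by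
      rintro x ⟨hxA, hxB⟩
      have : x = a • x + b • x := by
        rw [← add_smul, hab, one_smul]
      rw [this]
      exact N.add_mem (hxA a ha) (hxB b hb)
    rcases hsi _ _ hKL with h | h
    · -- colonSM A N ≤ N : then B • ⊤ ≤ N, use induction hypothesis
      apply ih hsmax
      rw [Submodule.smul_le]
      intro b' hb' x _
      apply h
      intro a' ha'
      rw [smul_smul]
      exact hABprod (Submodule.smul_mem_smul (Ideal.mul_mem_mul ha' hb') trivial)
    · -- colonSM B N ≤ N : then A • ⊤ ≤ N
      refine ⟨m, hmmax, ?_⟩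
      rw [Submodule.smul_le]
      intro a' ha' x _
      apply h
      intro b' hb'
      rw [smul_smul, mul_comm b' a']
      exact hABprod (Submodule.smul_mem_smul (Ideal.mul_mem_mul ha' hb') trivial)

/-- Key step: find a multiple `s • l ∉ N` with `m • (s • l) ⊆ N`. -/
lemma exists_socle_multiple {N : Submodule R M} {m : Ideal R} :
    ∀ (t : ℕ) (l : M), l ∉ N → (∀ c ∈ m ^ t, c • l ∈ N) →
      ∃ s : R, s • l ∉ N ∧ ∀ c ∈ m, (c * s) • l ∈ N := by
  intro t
  induction t with
  | zero =>
    intro l hl hml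
    exact absurd (by simpa using hml 1 (by simp)) hl
  | succ t ih =>
    intro l hl hml
    by_cases hcase : ∀ c ∈ m, c • l ∈ N
    · exact ⟨1, by simpa using hl, fun c hc => by rw [mul_one]; exact hcase c hc⟩
    · push_neg at hcase
      obtain ⟨c₀, hc₀m, hc₀l⟩ := hcase
      have hml' : ∀ c ∈ m ^ t, c • (c₀ • l) ∈ N := by
        intro c hc
        rw [smul_smul]
        apply hml
        rw [pow_succ]
        exact Ideal.mul_mem_mul hc hc₀m
      obtain ⟨s', hs', hs'm⟩ := ih (c₀ • l) hc₀l hml'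
      refine ⟨s' * c₀, ?_, ?_⟩
      · rwa [mul_smul]
      · intro c hc
        have := hs'm c hc
        rwa [smul_smul, mul_assoc] at this

end Split

theorem distributive_of_strongly_irreducible_dim_one
    {R : Type*} [CommRing R] [IsNoetherianRing R]
    {M : Type*} [AddCommGroup M] [Module R M] [Module.Finite R M]
    (hdim : ringKrullDim (R ⧸ Module.annihilator R M) = 1)
    (N : Submodule R M)
    (hsi : ∀ K L : Submodule R M, K ⊓ L ≤ N → K ≤ N ∨ L ≤ N)
    (hreg : ∃ r ∈ N.colon ⊤, ∀ x : M, r • x = 0 → x = 0) :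
    ∀ K L : Submodule R M, (K ⊓ L) ⊔ N = (K ⊔ N) ⊓ (L ⊔ N) := by
  classical
  by_cases hNtop : N = ⊤
  · subst hNtop; intro K L; simp
  obtain ⟨r, hrN, hr⟩ := hreg
  -- Step A: find a maximal ideal m and t with m ^ t • ⊤ ≤ N
  set I₁ : Ideal R := Module.annihilator R M ⊔ Ideal.span {r} with hI₁
  have hI₁N : I₁ • (⊤ : Submodule R M) ≤ N := by
    rw [Submodule.smul_le]
    intro c hc x _
    obtain ⟨v, hv, z, hz, hvz⟩ := Submodule.mem_sup.mp hc
    obtain ⟨u, hu⟩ := Ideal.mem_span_singleton'.mp hz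
    have hvx : v • x = 0 := Module.mem_annihilator.mp hv x
    have : c • x = v • x + u • (r • x) := by
      rw [← hvz, add_smul, ← hu, mul_smul]
    rw [this, hvx, zero_add]
    exact N.smul_mem u (Submodule.mem_colon.mp hrN x trivial)
  obtain ⟨n₀, hn₀⟩ := Ideal.exists_radical_pow_le_of_fg I₁ (IsNoetherian.noetherian _)
  set t := n₀ + 1 with ht
  have hradt : I₁.radical ^ t ≤ I₁ := le_trans (Ideal.pow_le_pow_right (Nat.le_succ n₀)) hn₀
  -- minimal primes over I₁ are finite and maximal
  have hfin : I₁.minimalPrimes.Finite := by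
    rw [Ideal.minimalPrimes_eq_comap]
    exact Set.Finite.image _ (minimalPrimes.finite_of_isNoetherianRing (R ⧸ I₁))
  set s : Finset (Ideal R) := hfin.toFinset with hs
  have hsmax : ∀ p ∈ s, p.IsMaximal := by
    intro p hp
    rw [hs, Set.Finite.mem_toFinset] at hp
    exact prime_over_reg_isMaximal hdim hr hp.1.1 hp.1.2
  have hprodrad : (∏ p ∈ s, p) ≤ I₁.radical := by
    rw [← Ideal.sInf_minimalPrimes]
    apply le_sInf
    intro b hb
    exact le_trans Ideal.prod_le_inf (Finset.inf_le (by rw [hs, Set.Finite.mem_toFinset]; exact hb))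
  have hprod : (∏ p ∈ s, p ^ t) • (⊤ : Submodule R M) ≤ N := by
    refine le_trans (Submodule.smul_mono_left ?_) (le_trans (Submodule.smul_mono_left hradt) hI₁N)
    rw [Finset.prod_pow]
    exact Ideal.pow_right_mono hprodrad t
  obtain ⟨m, hmmax, hmt⟩ := split_max N hsi hNtop t s hsmax hprod
  -- Step B: the distributivity
  intro K L
  apply le_antisymm
  · exact sup_le (le_inf (le_trans inf_le_left le_sup_left)
      (le_trans inf_le_right le_sup_left)) (le_inf le_sup_right le_sup_right)
  intro x hx
  obtain ⟨k, hk, n₁, hn₁, hxk⟩ := Submodule.mem_sup.mp hx.1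
  obtain ⟨l, hl, n₂, hn₂, hxl⟩ := Submodule.mem_sup.mp hx.2
  set d : M := k - l with hd
  have hdN : d ∈ N := by
    have : k - l = n₂ - n₁ := by
      have h := hxk.trans hxl.symm
      -- k + n₁ = l + n₂
      have : k - l = n₂ - n₁ := by
        rw [sub_eq_sub_iff_add_eq_add]
        rw [h]
        exact add_comm l n₂
      exact this
    rw [hd, this]
    exact N.sub_mem hn₂ hn₁
  by_cases hlN : l ∈ N
  · -- then x ∈ N
    apply Submodule.mem_sup_right
    rw [← hxl]
    exact N.add_mem hlN hn₂
  -- find s₀ with y := s₀ • l ∉ N, m • y ⊆ N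
  have hmtl : ∀ c ∈ m ^ t, c • l ∈ N := fun c hc =>
    hmt (Submodule.smul_mem_smul hc trivial)
  obtain ⟨s₀, hs₀, hs₀m⟩ := exists_socle_multiple t l hlN hmtl
  set y : M := s₀ • l with hy
  -- y + d ∉ N
  have hydN : y + d ∉ N := fun h => hs₀ (by simpa using N.sub_mem h hdN)
  -- apply hsi to span{y}, span{y+d}
  have hnle : ¬ (Submodule.span R {y} ⊓ Submodule.span R {y + d} ≤ N) := by
    intro h
    rcases hsi _ _ h with h' | h'
    · exact hs₀ (h' (Submodule.mem_span_singleton_self y))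
    · exact hydN (h' (Submodule.mem_span_singleton_self (y + d)))
  obtain ⟨z, hz, hzN⟩ := SetLike.not_le_iff_exists.mp hnle
  obtain ⟨a, haz⟩ := Submodule.mem_span_singleton.mp hz.1
  obtain ⟨b, hbz⟩ := Submodule.mem_span_singleton.mp hz.2
  -- b ∉ m
  have hbm : b ∉ m := by
    intro hbmem
    apply hzN
    rw [← hbz, smul_add]
    refine N.add_mem ?_ (N.smul_mem b hdN)
    rw [hy, smul_smul]
    exact hs₀m b hbmem
  -- span{b} ⊔ m^t = ⊤
  have hbtop : Ideal.span {b} ⊔ m ^ t = ⊤ := by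
    by_contra hne
    obtain ⟨q, hqmax, hq⟩ := Ideal.exists_le_maximal _ hne
    have hmq : m ≤ q := hqmax.isPrime.le_of_pow_le (le_trans le_sup_right hq)
    have : m = q := hmmax.eq_of_le hqmax.ne_top hmq
    apply hbm
    rw [this]
    exact (le_trans le_sup_left hq) (Ideal.subset_span (Set.mem_singleton b))
  obtain ⟨z', hz', w, hw, hzw⟩ := Submodule.mem_sup.mp
    (show (1 : R) ∈ Ideal.span {b} ⊔ m ^ t by rw [hbtop]; trivial)
  obtain ⟨u, hu⟩ := Ideal.mem_span_singleton'.mp hz'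
  -- b • d = a • y - b • y
  have hbd : b • d = a • y - b • y := by
    have h3 : b • y + b • d = a • y := by rw [← smul_add, hbz, haz]
    rw [← h3]; abel
  -- (u*b) • k ∈ K ⊓ L
  have hkl : k = l + d := by rw [hd]; abel
  have hubk_L : (u * b) • k = (u * b + u * (a * s₀) - u * (b * s₀)) • l := by
    have h4 : (u * b) • k = (u * b) • l + u • (b • d) := by
      rw [hkl, smul_add, mul_smul u b d]
    rw [h4, hbd, hy]
    module
  have hubkKL : (u * b) • k ∈ K ⊓ L := by
    constructor
    · exact K.smul_mem _ hk
    · rw [hubk_L]; exact L.smul_mem _ hl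
  -- w • k ∈ N
  have hwkN : w • k ∈ N := hmt (Submodule.smul_mem_smul hw trivial)
  -- x = (u*b) • k + (w • k + n₁)
  have hxeq : x = (u * b) • k + (w • k + n₁) := by
    have h1 : (u * b) • k + w • k = k := by
      rw [← add_smul, hu, hzw, one_smul]
    rw [← hxk, ← add_assoc, h1]
  rw [hxeq]
  exact Submodule.add_mem _ (Submodule.mem_sup_left hubkKL)
    (Submodule.mem_sup_right (N.add_mem hwkN hn₁))
end
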